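/- (Theorem 2, convergence rate.) Suppose G is bounded below with infimum G*, the constant step size satisfies 0 < α < 2/(L·σ²), and set κ = (α/n)·(1 − L·α·σ²/2) > 0. Let (B_t)_{t≥0} be an i.i.d. sequence of batches with common distribution μ, where μ(i ∈ B) ≥ p > 0 for every index i ∈ {1, …, M}. Fix a deterministic initial point θ_0 ∈ ℝ^d and define the random iterates θ_{t+1} = U(θ_t, B_t, α). Then for every horizon T ≥ 1, min_{0 ≤ t ≤ T−1} E[‖∇G(θ_t)‖²] ≤ √((G(θ_0) − G*)/(p·κ)) · (1/√T). -/

import Mathlib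

/-!
Each reweighting coefficient `w_i = max ⟪∇G θ, ∇f_i θ⟫ 0` is nonnegative and multiplies a vector
whose inner product with `∇G θ` is at least `w_i`, so the descent lemma turns one step on a batch
`B` into a decrease of `G` by `κ ∑_k w_{B_k}²`. Averaged over batches, each validation index is
drawn with probability at least `p`, and `‖∇G θ‖²` is the mean of the `⟪∇G θ, ∇f_i θ⟫ ≤ w_i`, so
the expected decrease is at least `p κ ‖∇G θ‖⁴`. Since the batches are i.i.d. with finitely many
values, the expectation of a function of `θ_t` is a finite weighted sum over batch paths, along
which this bound telescopes to `min_{t < T} E ‖∇G(θ_t)‖⁴ ≤ (G θ₀ - G*) / (p κ T)`; Jensen's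
inequality `(E X)² ≤ E X²` then gives the claim.
-/

open scoped RealInnerProductSpace
open MeasureTheory Finset

section Smooth

variable {E : Type*} [NormedAddCommGroup E] [InnerProductSpace ℝ E] [CompleteSpace E]

theorem hasDerivAt_comp_add_smul {G : E → ℝ} (hG : Differentiable ℝ G) (x v : E) (t : ℝ) :
    HasDerivAt (fun t : ℝ => G (x + t • v)) ⟪gradient G (x + t • v), v⟫ t := by
  have hline : HasDerivAt (fun t : ℝ => x + t • v) v t := by
    simpa using ((hasDerivAt_id t).smul_const v).const_add x
  have := (hasGradientAt_iff_hasFDerivAt.mp (hG _).hasGradientAt).comp_hasDerivAt t hline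
  rwa [InnerProductSpace.toDual_apply_apply] at this

theorem le_add_inner_gradient_add_of_lipschitz_gradient {G : E → ℝ} {L : ℝ}
    (hG : Differentiable ℝ G) (hGL : ∀ x y, ‖gradient G x - gradient G y‖ ≤ L * ‖x - y‖)
    (x y : E) : G y ≤ G x + ⟪gradient G x, y - x⟫ + L / 2 * ‖y - x‖ ^ 2 := by
  set v := y - x
  set ψ : ℝ → ℝ := fun t => G (x + t • v) - t * ⟪gradient G x, v⟫ - t ^ 2 * (L / 2 * ‖v‖ ^ 2)
  have hψ : ∀ t, HasDerivAt ψ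
      (⟪gradient G (x + t • v), v⟫ - ⟪gradient G x, v⟫ - 2 * t * (L / 2 * ‖v‖ ^ 2)) t := by
    intro t
    have hsq := (hasDerivAt_pow 2 t).mul_const (L / 2 * ‖v‖ ^ 2)
    simp only [Nat.cast_ofNat] at hsq
    exact ((hasDerivAt_comp_add_smul hG x v t).sub
      ((hasDerivAt_id t).mul_const _)).sub hsq |>.congr_deriv (by simp)
  have hanti : AntitoneOn ψ (Set.Icc 0 1) := by
    refine antitoneOn_of_deriv_nonpos (convex_Icc 0 1)
      (fun t _ => (hψ t).continuousAt.continuousWithinAt)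
      (fun t _ => (hψ t).differentiableAt.differentiableWithinAt) fun t ht => ?_
    rw [interior_Icc] at ht
    have hgap : ⟪gradient G (x + t • v) - gradient G x, v⟫ ≤ L * t * ‖v‖ ^ 2 :=
      calc ⟪gradient G (x + t • v) - gradient G x, v⟫
          ≤ ‖gradient G (x + t • v) - gradient G x‖ * ‖v‖ := real_inner_le_norm _ _
        _ ≤ L * ‖(x + t • v) - x‖ * ‖v‖ := by gcongr; exact hGL _ _
        _ = L * t * ‖v‖ ^ 2 := by
          rw [add_sub_cancel_left, norm_smul, Real.norm_of_nonneg ht.1.le]; ring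
    rw [inner_sub_left] at hgap
    rw [(hψ t).deriv]
    linarith
  have h01 := hanti (by simp) (by simp) zero_le_one
  simp only [ψ, zero_smul, add_zero, one_smul, v, add_sub_cancel] at h01
  linarith

theorem gradient_const_mul_sum {ι : Type*} [Fintype ι] {g : ι → E → ℝ}
    (hg : ∀ i, Differentiable ℝ (g i)) {G : E → ℝ} {c : ℝ} (hG : ∀ x, G x = c * ∑ i, g i x)
    (x : E) : gradient G x = c • ∑ i, gradient (g i) x := by
  have hsum : HasFDerivAt (fun y => c * ∑ i, g i y)
      (c • ∑ i, InnerProductSpace.toDual ℝ E (gradient (g i) x)) x :=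
    (HasFDerivAt.fun_sum fun i _ =>
      hasGradientAt_iff_hasFDerivAt.mp ((hg i) x).hasGradientAt).const_mul c
  refine HasGradientAt.gradient (hasGradientAt_iff_hasFDerivAt.mpr ?_)
  rw [funext hG]
  simpa [map_sum] using hsum

theorem max_zero_mul_eq_sq (a : ℝ) : max a 0 * a = max a 0 ^ 2 := by
  rcases le_total a 0 with h | h <;> simp [h, sq]

theorem le_sub_of_reweighted_step {G : E → ℝ} {L σ : ℝ} (hG : Differentiable ℝ G)
    (hGL : ∀ x y, ‖gradient G x - gradient G y‖ ≤ L * ‖x - y‖) (hL : 0 ≤ L)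
    {n : ℕ} (hn : 0 < n) {v : Fin n → E} (hv : ∀ k, ‖v k‖ ≤ σ) (θ : E) (α : ℝ) :
    G (θ - (α / n) • ∑ k, max ⟪gradient G θ, v k⟫ 0 • v k) ≤
      G θ - α / n * (1 - L * α * σ ^ 2 / 2) * ∑ k, max ⟪gradient G θ, v k⟫ 0 ^ 2 := by
  set w : Fin n → ℝ := fun k => max ⟪gradient G θ, v k⟫ 0
  set W := ∑ k, w k ^ 2
  have hw0 : ∀ k, 0 ≤ w k := fun k => le_max_right _ _
  have hinner : ⟪gradient G θ, -((α / n) • ∑ k, w k • v k)⟫ = -(α / n) * W := by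
    simp only [inner_neg_right, inner_smul_right, inner_sum, w, W, max_zero_mul_eq_sq,
      neg_mul]
  have hnorm : ‖∑ k, w k • v k‖ ^ 2 ≤ σ ^ 2 * (n * W) :=
    calc ‖∑ k, w k • v k‖ ^ 2 ≤ (σ * ∑ k, w k) ^ 2 := by
          gcongr
          refine (norm_sum_le _ _).trans ?_
          rw [mul_sum]
          refine sum_le_sum fun k _ => ?_
          rw [norm_smul, Real.norm_of_nonneg (hw0 k), mul_comm]
          exact mul_le_mul_of_nonneg_right (hv k) (hw0 k)
      _ ≤ σ ^ 2 * (n * W) := by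
          rw [mul_pow]
          gcongr
          simpa using sq_sum_le_card_mul_sum_sq (s := univ) (f := w)
  have hdescent := le_add_inner_gradient_add_of_lipschitz_gradient hG hGL θ
    (θ - (α / n) • ∑ k, w k • v k)
  rw [sub_sub_cancel_left, hinner, norm_neg, norm_smul, mul_pow, Real.norm_eq_abs, sq_abs]
    at hdescent
  have hn' : (n : ℝ) ≠ 0 := by positivity
  calc _ ≤ _ := hdescent
    _ ≤ G θ + -(α / n) * W + L / 2 * ((α / n) ^ 2 * (σ ^ 2 * (n * W))) := by gcongr
    _ = _ := by field_simp; ring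

noncomputable def reweightedStep {ι : Type*} {n : ℕ} (G : E → ℝ) (f : ι → E → ℝ) (α : ℝ)
    (θ : E) (B : Fin n → ι) : E :=
  θ - (α / n) • ∑ k, max ⟪gradient G θ, gradient (f (B k)) θ⟫ 0 • gradient (f (B k)) θ

end Smooth

theorem mul_sum_le_sum_mul_sum_of_coverage {ι α β : Type*} [Fintype ι] [DecidableEq ι]
    [Fintype α] [Fintype β] [DecidableEq β] {e : α → β} (he : Function.Injective e)
    {μ : (ι → β) → ℝ} (hμ0 : ∀ c, 0 ≤ μ c) {p : ℝ}
    (hμp : ∀ a, p ≤ ∑ c ∈ univ.filter (fun c : ι → β => ∃ k, c k = e a), μ c)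
    {u : β → ℝ} (hu : ∀ b, 0 ≤ u b) :
    p * ∑ a, u (e a) ≤ ∑ c, μ c * ∑ k, u (c k) := by
  have hcovered : ∀ c : ι → β, ∑ a ∈ univ.filter (fun a => ∃ k, c k = e a), u (e a) ≤
      ∑ k, u (c k) := fun c =>
    calc ∑ a ∈ univ.filter (fun a => ∃ k, c k = e a), u (e a)
        = ∑ b ∈ (univ.filter (fun a => ∃ k, c k = e a)).image e, u b :=
          (sum_image fun _ _ _ _ h => he h).symm
      _ ≤ ∑ b ∈ univ.image c, u b :=
          sum_le_sum_of_subset_of_nonneg (by intro b; simp +contextual [eq_comm])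
            fun b _ _ => hu b
      _ ≤ ∑ k, u (c k) := sum_image_le_of_nonneg fun b _ => hu b
  calc p * ∑ a, u (e a)
      ≤ ∑ a, (∑ c ∈ univ.filter (fun c : ι → β => ∃ k, c k = e a), μ c) * u (e a) := by
        rw [mul_sum]
        exact sum_le_sum fun a _ => mul_le_mul_of_nonneg_right (hμp a) (hu _)
    _ = ∑ c, μ c * ∑ a ∈ univ.filter (fun a => ∃ k, c k = e a), u (e a) := by
        simp only [sum_filter, sum_mul, mul_sum, ite_mul, zero_mul, mul_ite, mul_zero]
        rw [sum_comm]
    _ ≤ ∑ c, μ c * ∑ k, u (c k) :=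
        sum_le_sum fun c _ => mul_le_mul_of_nonneg_left (hcovered c) (hμ0 c)

theorem norm_pow_four_le_sum_sq_max_inner {E : Type*} [NormedAddCommGroup E]
    [InnerProductSpace ℝ E] {M : ℕ} (hM : 0 < M) (v : Fin M → E) {g : E}
    (hg : g = (1 / (M : ℝ)) • ∑ i, v i) :
    ‖g‖ ^ 4 ≤ ∑ i, max ⟪g, v i⟫ 0 ^ 2 := by
  set w : Fin M → ℝ := fun i => max ⟪g, v i⟫ 0
  have hM1 : (1 : ℝ) ≤ M := by exact_mod_cast hM
  have hnorm : ‖g‖ ^ 2 ≤ (∑ i, w i) / M := by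
    calc ‖g‖ ^ 2 = ⟪g, g⟫ := (real_inner_self_eq_norm_sq g).symm
      _ = (∑ i, ⟪g, v i⟫) / M := by
          nth_rewrite 2 [hg]
          rw [inner_smul_right, inner_sum, one_div, inv_mul_eq_div]
      _ ≤ (∑ i, w i) / M := by gcongr with i; exact le_max_left _ _
  calc ‖g‖ ^ 4 = (‖g‖ ^ 2) ^ 2 := by ring
    _ ≤ ((∑ i, w i) / M) ^ 2 := by gcongr
    _ ≤ (∑ i, w i ^ 2) / M := by
        simpa using sum_div_card_sq_le_sum_sq_div_card (s := univ) (f := w)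
    _ ≤ ∑ i, w i ^ 2 := div_le_self (sum_nonneg fun i _ => sq_nonneg _) hM1

section PathExpectation

variable {β E : Type*} [Fintype β] (μ : β → ℝ) (step : E → β → E)

def transitionOp (h : E → ℝ) (x : E) : ℝ := ∑ c, μ c * h (step x c)

def pathExpectation (x₀ : E) (t : ℕ) (h : E → ℝ) : ℝ :=
  ∑ b : Fin t → β, (∏ s, μ (b s)) * h ((List.ofFn b).foldl step x₀)

variable {μ step} {x₀ : E}

theorem pathExpectation_zero (h : E → ℝ) : pathExpectation μ step x₀ 0 h = h x₀ := by
  simp [pathExpectation]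

theorem pathExpectation_succ (t : ℕ) (h : E → ℝ) :
    pathExpectation μ step x₀ (t + 1) h =
      pathExpectation μ step x₀ t (transitionOp μ step h) := by
  simp only [pathExpectation, transitionOp, mul_sum]
  rw [← (Fin.snocEquiv fun _ => β).sum_comp, Fintype.sum_prod_type, sum_comm]
  refine sum_congr rfl fun b _ => sum_congr rfl fun c _ => ?_
  simp only [Fin.snocEquiv, Equiv.coe_fn_mk, Fin.prod_univ_castSucc, Fin.snoc_castSucc,
    Fin.snoc_last, List.ofFn_succ', List.concat_eq_append, List.foldl_append, List.foldl_cons,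
    List.foldl_nil]
  ring

theorem pathExpectation_mono (hμ0 : ∀ c, 0 ≤ μ c) (t : ℕ) {h h' : E → ℝ}
    (hh : ∀ x, h x ≤ h' x) : pathExpectation μ step x₀ t h ≤ pathExpectation μ step x₀ t h' :=
  sum_le_sum fun _ _ => mul_le_mul_of_nonneg_left (hh _) (prod_nonneg fun _ _ => hμ0 _)

theorem pathExpectation_sub_mul (t : ℕ) (h h' : E → ℝ) (c : ℝ) :
    pathExpectation μ step x₀ t (fun x => h x - c * h' x) =
      pathExpectation μ step x₀ t h - c * pathExpectation μ step x₀ t h' := by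
  simp only [pathExpectation, mul_sub, sum_sub_distrib, mul_sum, mul_left_comm]

theorem pathExpectation_const (hμ1 : ∑ c, μ c = 1) (t : ℕ) (a : ℝ) :
    pathExpectation μ step x₀ t (fun _ => a) = a := by
  induction t with
  | zero => exact pathExpectation_zero _
  | succ t ih =>
    have hconst : transitionOp μ step (fun _ => a) = fun _ => a :=
      funext fun x => by simp [transitionOp, ← sum_mul, hμ1]
    rw [pathExpectation_succ, hconst, ih]

theorem sq_pathExpectation_le (hμ0 : ∀ c, 0 ≤ μ c) (hμ1 : ∑ c, μ c = 1) (t : ℕ)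
    (h : E → ℝ) :
    pathExpectation μ step x₀ t h ^ 2 ≤ pathExpectation μ step x₀ t (fun x => h x ^ 2) := by
  have hweights : ∑ b : Fin t → β, ∏ s, μ (b s) = 1 := by
    simpa [pathExpectation] using pathExpectation_const (step := step) (x₀ := x₀) hμ1 t 1
  simpa [pathExpectation] using (even_two.convexOn_pow).map_sum_le
    (fun b _ => prod_nonneg fun s _ => hμ0 (b s)) hweights (fun b _ => Set.mem_univ
      (h ((List.ofFn b).foldl step x₀)))

theorem pathExpectation_add_sum_le (hμ0 : ∀ c, 0 ≤ μ c) {V q : E → ℝ} {c : ℝ}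
    (hV : ∀ x, transitionOp μ step V x ≤ V x - c * q x) (T : ℕ) :
    pathExpectation μ step x₀ T V + c * ∑ t ∈ range T, pathExpectation μ step x₀ t q ≤ V x₀ := by
  induction T with
  | zero => simp [pathExpectation_zero]
  | succ T ih =>
    have hdecr := pathExpectation_mono (step := step) (x₀ := x₀) hμ0 T hV
    rw [pathExpectation_sub_mul] at hdecr
    rw [pathExpectation_succ, sum_range_succ]
    linarith

theorem exists_lt_pathExpectation_le (hμ0 : ∀ c, 0 ≤ μ c) (hμ1 : ∑ c, μ c = 1)
    {V q : E → ℝ} {Vmin c : ℝ} (hc : 0 < c) (hVmin : ∀ x, Vmin ≤ V x)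
    (hV : ∀ x, transitionOp μ step V x ≤ V x - c * q x) {T : ℕ} (hT : 0 < T) :
    ∃ t < T, pathExpectation μ step x₀ t q ≤ (V x₀ - Vmin) / (c * T) := by
  obtain ⟨t, ht, hmin⟩ := exists_min_image (range T) (pathExpectation μ step x₀ · q)
    (nonempty_range_iff.mpr hT.ne')
  refine ⟨t, mem_range.mp ht, ?_⟩
  have hsum : T * pathExpectation μ step x₀ t q ≤ ∑ s ∈ range T, pathExpectation μ step x₀ s q := by
    simpa using card_nsmul_le_sum (range T) _ _ hmin
  have hlow : Vmin ≤ pathExpectation μ step x₀ T V := by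
    simpa [pathExpectation_const hμ1] using pathExpectation_mono hμ0 T (x₀ := x₀) hVmin
  rw [le_div_iff₀ (by positivity)]
  linarith [pathExpectation_add_sum_le hμ0 hV T (x₀ := x₀), mul_le_mul_of_nonneg_left hsum hc.le]

end PathExpectation

theorem integral_comp_fin_tuple_eq_sum {Ω β : Type*} [MeasurableSpace Ω] {ℙ : Measure Ω}
    [IsProbabilityMeasure ℙ] [Fintype β] [MeasurableSpace β] [MeasurableSingletonClass β]
    {X : ℕ → Ω → β} (hX : ∀ t, Measurable (X t)) {μ : β → ℝ} (hμ0 : ∀ b, 0 ≤ μ b)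
    (hiid : ∀ (s : Finset ℕ) (b : ℕ → β),
      ℙ {ω | ∀ t ∈ s, X t ω = b t} = ∏ t ∈ s, ENNReal.ofReal (μ (b t)))
    (t : ℕ) (F : (Fin t → β) → ℝ) :
    ∫ ω, F (fun s => X s ω) ∂ℙ = ∑ b, (∏ s, μ (b s)) * F b := by
  have hmeas : Measurable fun ω (s : Fin t) => X s ω := measurable_pi_lambda _ fun s => hX s
  rw [← integral_map hmeas.aemeasurable Integrable.of_finite.aestronglyMeasurable,
    integral_fintype Integrable.of_finite]
  refine sum_congr rfl fun b _ => ?_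
  obtain ⟨ω₀⟩ := nonempty_of_isProbabilityMeasure ℙ
  set b' : ℕ → β := fun s => if h : s < t then b ⟨s, h⟩ else X 0 ω₀
  have hcylinder : (fun ω (s : Fin t) => X s ω) ⁻¹' {b} = {ω | ∀ s ∈ range t, X s ω = b' s} := by
    ext ω
    simp +contextual [b', funext_iff, Fin.forall_iff]
  rw [map_measureReal_apply hmeas (measurableSet_singleton b), measureReal_def, hcylinder, hiid,
    ← ENNReal.ofReal_prod_of_nonneg fun s _ => hμ0 _,
    ENNReal.toReal_ofReal (prod_nonneg fun s _ => hμ0 _), ← Fin.prod_univ_eq_prod_range,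
    smul_eq_mul]
  simp [b']

theorem eq_foldl_ofFn_of_succ {E β : Type*} {step : E → β → E} {x : ℕ → E} {b : ℕ → β}
    (hx : ∀ t, x (t + 1) = step (x t) (b t)) (t : ℕ) :
    x t = (List.ofFn fun s : Fin t => b s).foldl step (x 0) := by
  induction t with
  | zero => rfl
  | succ t ih => rw [hx, ih, List.ofFn_succ', List.concat_eq_append, List.foldl_append]; rfl

theorem transitionOp_reweightedStep_le {E : Type*} [NormedAddCommGroup E]
    [InnerProductSpace ℝ E] [CompleteSpace E] {N M n : ℕ} (hM : 0 < M) (hn : 0 < n)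
    (hMN : M ≤ N) {σ L α κ p : ℝ} (hL : 0 ≤ L) {f : Fin N → E → ℝ}
    (hf : ∀ i, Differentiable ℝ (f i)) (hfb : ∀ i x, ‖gradient (f i) x‖ ≤ σ) {G : E → ℝ}
    (hG : ∀ θ, G θ = (1 / (M : ℝ)) * ∑ i : Fin M, f (Fin.castLE hMN i) θ)
    (hGL : ∀ x y, ‖gradient G x - gradient G y‖ ≤ L * ‖x - y‖)
    (hκ : κ = α / n * (1 - L * α * σ ^ 2 / 2)) (hκ0 : 0 ≤ κ) {μ : (Fin n → Fin N) → ℝ}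
    (hμ0 : ∀ B, 0 ≤ μ B) (hμ1 : ∑ B, μ B = 1) (hp : 0 ≤ p)
    (hμp : ∀ i : Fin M,
      p ≤ ∑ B ∈ univ.filter (fun B : Fin n → Fin N => ∃ k, B k = Fin.castLE hMN i), μ B)
    (θ : E) :
    transitionOp μ (reweightedStep G f α) G θ ≤ G θ - p * κ * ‖gradient G θ‖ ^ 4 := by
  have hGd : Differentiable ℝ G := by
    rw [funext hG]
    exact (Differentiable.fun_sum fun i _ => hf _).const_mul _
  set w : Fin N → ℝ := fun i => max ⟪gradient G θ, gradient (f i) θ⟫ 0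
  have hbatch : ∀ B, G (reweightedStep G f α θ B) ≤ G θ - κ * ∑ k, w (B k) ^ 2 := fun B =>
    hκ ▸ le_sub_of_reweighted_step hGd hGL hL hn (fun k => hfb (B k) θ) θ α
  have hcover : p * ∑ i : Fin M, w (Fin.castLE hMN i) ^ 2 ≤ ∑ B, μ B * ∑ k, w (B k) ^ 2 :=
    -- `convert`: the filter in `hμp` is decided by `Nat.decidableExistsFin`
    mul_sum_le_sum_mul_sum_of_coverage (Fin.castLE_injective hMN) hμ0 (fun i => by convert hμp i)
      fun _ => sq_nonneg _
  have hgrad : ‖gradient G θ‖ ^ 4 ≤ ∑ i : Fin M, w (Fin.castLE hMN i) ^ 2 :=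
    norm_pow_four_le_sum_sq_max_inner hM _ (gradient_const_mul_sum (fun _ => hf _) hG θ)
  calc transitionOp μ (reweightedStep G f α) G θ
      ≤ ∑ B, μ B * (G θ - κ * ∑ k, w (B k) ^ 2) :=
        sum_le_sum fun B _ => mul_le_mul_of_nonneg_left (hbatch B) (hμ0 B)
    _ = G θ - κ * ∑ B, μ B * ∑ k, w (B k) ^ 2 := by
        simp only [mul_sub, sum_sub_distrib, ← sum_mul, hμ1, one_mul, mul_left_comm _ κ, ← mul_sum]
    _ ≤ G θ - p * κ * ‖gradient G θ‖ ^ 4 := by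
        linarith [mul_le_mul_of_nonneg_left hcover hκ0,
          mul_le_mul_of_nonneg_left hgrad (mul_nonneg hp hκ0)]

/-- Theorem 2, convergence rate: suppose `G` is bounded below with infimum
`G*`, `0 < α < 2/(L·σ²)`, and `κ = (α/n)·(1 − L·α·σ²/2) > 0`. Let `(B_t)` be an i.i.d.
sequence of batches with common distribution `μ`, where `μ(i ∈ B) ≥ p > 0` for every index
`i ∈ {1, …, M}`. Fix a deterministic initial point `θ₀` and define the random iterates
`θ (t+1) = U (θ t) (B t) α`. Then for every horizon `T ≥ 1`,
`min_{0 ≤ t ≤ T−1} E[‖∇G(θ_t)‖²] ≤ √((G(θ₀) − G*)/(p·κ)) · (1/√T)`. -/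
theorem reweighted_sgd_convergence_rate
    (d N M n : ℕ) (hM : 0 < M) (hn : 0 < n) (hMN : M ≤ N)
    (σ L : ℝ) (hL : 0 < L)
    (f : Fin N → EuclideanSpace ℝ (Fin d) → ℝ)
    (hf : ∀ i, ContDiff ℝ 1 (f i))
    (hfb : ∀ i x, ‖gradient (f i) x‖ ≤ σ)
    (G : EuclideanSpace ℝ (Fin d) → ℝ)
    (hG : ∀ θ, G θ = (1 / (M : ℝ)) * ∑ i : Fin M, f (Fin.castLE hMN i) θ)
    (hGL : ∀ x y, ‖gradient G x - gradient G y‖ ≤ L * ‖x - y‖)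
    (U : EuclideanSpace ℝ (Fin d) → (Fin n → Fin N) → ℝ → EuclideanSpace ℝ (Fin d))
    (hU : ∀ θ B α, U θ B α = θ - (α / (n : ℝ)) • ∑ k : Fin n,
        max ⟪gradient G θ, gradient (f (B k)) θ⟫ 0 • gradient (f (B k)) θ)
    (Gstar : ℝ) (hGstar : IsGLB (Set.range G) Gstar)
    (α : ℝ)
    (κ : ℝ) (hκ : κ = (α / (n : ℝ)) * (1 - L * α * σ ^ 2 / 2)) (hκpos : 0 < κ)
    (μ : (Fin n → Fin N) → ℝ)
    (hμ0 : ∀ B, 0 ≤ μ B) (hμ1 : ∑ B : Fin n → Fin N, μ B = 1)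
    (p : ℝ) (hp : 0 < p)
    (hμp : ∀ i : Fin M,
      p ≤ ∑ B ∈ Finset.univ.filter (fun B : Fin n → Fin N => ∃ k, B k = Fin.castLE hMN i), μ B)
    (Ω : Type*) [MeasurableSpace Ω] (ℙ : Measure Ω) [IsProbabilityMeasure ℙ]
    (B : ℕ → Ω → (Fin n → Fin N)) (hBmeas : ∀ t, Measurable (B t))
    -- `(B_t)` is i.i.d. with common distribution `μ`: finite-dimensional distributions factor.
    (hiid : ∀ (s : Finset ℕ) (b : ℕ → (Fin n → Fin N)),
      ℙ {ω | ∀ t ∈ s, B t ω = b t} = ∏ t ∈ s, ENNReal.ofReal (μ (b t)))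
    (θ₀ : EuclideanSpace ℝ (Fin d))
    (θ : ℕ → Ω → EuclideanSpace ℝ (Fin d))
    (hθ0 : ∀ ω, θ 0 ω = θ₀)
    (hθ : ∀ t ω, θ (t + 1) ω = U (θ t ω) (B t ω) α)
    (Thor : ℕ) (hThor : 1 ≤ Thor) :
    (Finset.range Thor).inf' (Finset.nonempty_range_iff.mpr (by omega))
        (fun t => ∫ ω, ‖gradient G (θ t ω)‖ ^ 2 ∂ℙ) ≤
      Real.sqrt ((G θ₀ - Gstar) / (p * κ)) * (1 / Real.sqrt (Thor : ℝ)) := by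
  have hθpath : ∀ t ω, θ t ω =
      (List.ofFn fun s : Fin t => B s ω).foldl (reweightedStep G f α) θ₀ := fun t ω => by
    rw [eq_foldl_ofFn_of_succ (step := reweightedStep G f α) (x := (θ · ω))
      (fun t => (hθ t ω).trans (hU _ _ _)) t, hθ0]
  have hE : ∀ t (h : EuclideanSpace ℝ (Fin d) → ℝ),
      ∫ ω, h (θ t ω) ∂ℙ = pathExpectation μ (reweightedStep G f α) θ₀ t h := fun t h => by
    simp_rw [hθpath]
    exact integral_comp_fin_tuple_eq_sum hBmeas hμ0 hiid t
      fun b => h ((List.ofFn b).foldl (reweightedStep G f α) θ₀)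
  obtain ⟨t, ht, hbound⟩ := exists_lt_pathExpectation_le (x₀ := θ₀) hμ0 hμ1 (mul_pos hp hκpos)
    (fun x => hGstar.1 ⟨x, rfl⟩)
    (transitionOp_reweightedStep_le hM hn hMN hL.le (fun i => (hf i).differentiable one_ne_zero)
      hfb hG hGL hκ hκpos.le hμ0 hμ1 hp.le hμp) (by omega : 0 < Thor)
  have hjensen := sq_pathExpectation_le (step := reweightedStep G f α) (x₀ := θ₀) hμ0 hμ1 t
    fun x => ‖gradient G x‖ ^ 2
  simp only [← pow_mul, Nat.reduceMul] at hjensen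
  calc _ ≤ ∫ ω, ‖gradient G (θ t ω)‖ ^ 2 ∂ℙ := inf'_le _ (mem_range.mpr ht)
    _ ≤ √((G θ₀ - Gstar) / (p * κ * Thor)) := by
        rw [hE t fun x => ‖gradient G x‖ ^ 2]
        exact Real.le_sqrt_of_sq_le (hjensen.trans hbound)
    _ = _ := by rw [← div_div, Real.sqrt_div' _ (Nat.cast_nonneg Thor), div_eq_mul_one_div]
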